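/- arXiv:2105.09756 — 2 statements merged into one kernel-verified Lean document; each statement's English description precedes it below -/
import Mathlib

section
/- Let H be a finite graph. Call a vertex v good in H if the number of neighbors u of v with deg_H(u) ≤ deg_H(v) is at least deg_H(v)/3. Then at least half of the edges of H are incident on at least one good vertex. -/
/-!
Orient every edge of `H` towards its endpoint of larger degree. A bad vertex `v` has fewer
than `deg v / 3` neighbours of degree `≤ deg v`, hence more than twice as many neighbours of
strictly larger degree. An edge with two bad endpoints is seen as a lower neighbour by one of
them, so twice the number of such edges is at most the number of strictly increasing oriented
edges, which is at most the number of edges.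
-/

open Finset

namespace SimpleGraph

variable {V α : Type*} [Fintype V] [LinearOrder α]
  (G : SimpleGraph V) [DecidableRel G.Adj] (f : V → α)

def lowerNeighborFinset (v : V) : Finset V := {u ∈ G.neighborFinset v | f u ≤ f v}

def upperNeighborFinset (v : V) : Finset V := {u ∈ G.neighborFinset v | f v < f u}

lemma card_lowerNeighborFinset_add_card_upperNeighborFinset (v : V) :
    #(G.lowerNeighborFinset f v) + #(G.upperNeighborFinset f v) = G.degree v := by
  rw [← card_neighborFinset_eq_degree,
    ← card_filter_add_card_filter_not (s := G.neighborFinset v) (fun u => f u ≤ f v)]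
  simp only [lowerNeighborFinset, upperNeighborFinset, not_le]

lemma sum_card_upperNeighborFinset_le :
    ∑ v, #(G.upperNeighborFinset f v) ≤ #G.edgeFinset := by
  rw [← card_sigma]
  refine card_le_card_of_injOn (fun p => s(p.1, p.2)) ?_ ?_
  · rintro ⟨v, u⟩ h
    simp only [coe_sigma, Set.mem_sigma_iff, upperNeighborFinset, coe_filter,
      mem_neighborFinset, Set.mem_ofPred_eq] at h
    simpa using h.2.1
  · rintro ⟨v, u⟩ h ⟨v', u'⟩ h' heq
    simp only [coe_sigma, Set.mem_sigma_iff, upperNeighborFinset, coe_filter,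
      Set.mem_ofPred_eq] at h h'
    rcases Sym2.eq_iff.1 heq with ⟨rfl, rfl⟩ | ⟨rfl, rfl⟩
    · rfl
    · exact absurd h.2.2 (lt_asymm h'.2.2)

lemma card_edges_within_le_sum_card_lowerNeighborFinset [DecidableEq V] (s : Finset V) :
    #{e ∈ G.edgeFinset | ∀ v ∈ e, v ∈ s} ≤ ∑ v ∈ s, #(G.lowerNeighborFinset f v) := by
  rw [← card_sigma]
  refine card_le_card_of_surjOn (fun p => s(p.1, p.2)) ?_
  intro e he
  induction e using Sym2.ind with
  | _ u v =>
    simp only [coe_filter, mem_edgeFinset, mem_edgeSet, Sym2.mem_iff, forall_eq_or_imp,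
      forall_eq, Set.mem_ofPred_eq] at he
    obtain ⟨huv, hu, hv⟩ := he
    rcases le_total (f u) (f v) with h | h
    · exact ⟨⟨v, u⟩, by simp [lowerNeighborFinset, hv, huv.symm, h], Sym2.eq_swap⟩
    · exact ⟨⟨u, v⟩, by simp [lowerNeighborFinset, hu, huv, h], rfl⟩

lemma two_mul_card_edges_within_le [DecidableEq V] (s : Finset V)
    (hs : ∀ v ∈ s, 2 * #(G.lowerNeighborFinset f v) ≤ #(G.upperNeighborFinset f v)) :
    2 * #{e ∈ G.edgeFinset | ∀ v ∈ e, v ∈ s} ≤ #G.edgeFinset :=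
  calc 2 * #{e ∈ G.edgeFinset | ∀ v ∈ e, v ∈ s}
      ≤ 2 * ∑ v ∈ s, #(G.lowerNeighborFinset f v) := by
        gcongr; exact G.card_edges_within_le_sum_card_lowerNeighborFinset f s
    _ = ∑ v ∈ s, 2 * #(G.lowerNeighborFinset f v) := mul_sum _ _ _
    _ ≤ ∑ v ∈ s, #(G.upperNeighborFinset f v) := sum_le_sum hs
    _ ≤ ∑ v, #(G.upperNeighborFinset f v) := sum_le_sum_of_subset (subset_univ s)
    _ ≤ #G.edgeFinset := G.sum_card_upperNeighborFinset_le f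

end SimpleGraph

/-- Good-vertex lemma (Alon–Babai–Itai).  Call a vertex `v` of a finite graph
`H` good if at least a third of its neighbors `u` satisfy
`deg u ≤ deg v`.  Then at least half of the edges of `H` are incident on at
least one good vertex. -/
theorem stmt_6 (V : Type*) [Fintype V] [DecidableEq V]
    (H : SimpleGraph V) [DecidableRel H.Adj] :
    H.edgeSet.ncard ≤
      2 * {e ∈ H.edgeSet | ∃ v, v ∈ e ∧
        H.degree v ≤ 3 * ((H.neighborFinset v).filter
          (fun u => H.degree u ≤ H.degree v)).card}.ncard := by
  let deg : V → ℕ := fun v => H.degree v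
  set good : V → Prop := fun v => H.degree v ≤ 3 * #(H.lowerNeighborFinset deg v)
  set bad : Finset V := {v | ¬ good v}
  have hbad : ∀ v ∈ bad, 2 * #(H.lowerNeighborFinset deg v) ≤
      #(H.upperNeighborFinset deg v) := fun v hv => by
    have := H.card_lowerNeighborFinset_add_card_upperNeighborFinset deg v
    simp only [bad, good, mem_filter, mem_univ, true_and, not_le] at hv
    omega
  have hsplit : #{e ∈ H.edgeFinset | ∃ v ∈ e, good v} +
      #{e ∈ H.edgeFinset | ∀ v ∈ e, v ∈ bad} = #H.edgeFinset := by
    rw [← card_filter_add_card_filter_not (s := H.edgeFinset) (fun e => ∃ v ∈ e, good v)]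
    simp [bad]
  have hbadEdges := H.two_mul_card_edges_within_le deg bad hbad
  rw [← SimpleGraph.coe_edgeFinset, Set.ncard_coe_finset]
  calc #H.edgeFinset ≤ 2 * #{e ∈ H.edgeFinset | ∃ v ∈ e, good v} := by omega
    _ = _ := by
      rw [← Set.ncard_coe_finset]
      congr 2
      ext e
      simp [good, deg, SimpleGraph.lowerNeighborFinset]
end

section
/- Consider the incremental node c-coloring LCL over O = {1, ..., c}: a decided vertex with output i is content iff (1) no neighbor has output i and (2) the number of neighbors with outputs in {1, ..., i-1} is at least i-1. The cores of output value i are exactly the multisets M of size i-1 supported on {1, ..., i-1}, with no restriction other than Σ_{j<i} M(j) = i-1 and M(i) = 0. Consequently, the supportive digraph has an edge from i to j iff j < i, so its longest directed path has length c-1, i.e., the incremental node c-coloring LCL has influence number c-1. -/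
/-- Cores and influence number of the incremental node `c`-coloring LCL over
output values `{1, …, c}` (encoded as `Fin c`, so color index `i` is the
`(i+1)`-st color): `ℓ(i, M)` holds iff `i ∉ M` and `M` contains at least `i`
elements smaller than `i`.  The cores of `i` are exactly the multisets of
size `i` supported on colors `< i`; hence the supportive digraph has an edge
from `i` to `j` iff `j < i`, and the longest directed path has length `c - 1`
(influence number `c - 1`). -/
theorem stmt_13 (c : ℕ) (hc : 0 < c)
    (ℓ : Fin c → Multiset (Fin c) → Prop)
    (hℓ : ∀ i M, ℓ i M ↔
      (M.count i = 0 ∧ (i : ℕ) ≤ (M.filter (fun j => j < i)).card))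
    (IsCore : Fin c → Multiset (Fin c) → Prop)
    (hcore : ∀ i M, IsCore i M ↔ (ℓ i M ∧ ∀ N, ℓ i N → N ≤ M → N = M))
    (E : Fin c → Fin c → Prop)
    (hE : ∀ o o', E o o' ↔ ∃ M, IsCore o M ∧ o' ∈ M) :
    (∀ i M, IsCore i M ↔ ((∀ j ∈ M, j < i) ∧ M.card = (i : ℕ))) ∧
    (∀ o o', E o o' ↔ o' < o) ∧
    IsGreatest {n : ℕ | ∃ p : ℕ → Fin c, ∀ i < n, E (p i) (p (i + 1))} (c - 1) := by
  have key : ∀ i M, IsCore i M ↔ ((∀ j ∈ M, j < i) ∧ M.card = (i : ℕ)) := by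
    intro i M
    rw [hcore, hℓ]
    constructor
    · rintro ⟨⟨hcnt, hcard⟩, hmin⟩
      set N := M.filter (fun j => j < i) with hN
      have hNle : N ≤ M := Multiset.filter_le _ M
      have hNfilt : N.filter (fun j => j < i) = N := by
        rw [Multiset.filter_eq_self]
        intro a ha; exact (Multiset.mem_filter.1 ha).2
      have hNM : N = M := by
        refine hmin N ?_ hNle
        rw [hℓ]
        constructor
        · have := Multiset.count_le_of_le i hNle; omega
        · rw [hNfilt]; exact hcard
      have hall : ∀ j ∈ M, j < i := by
        intro j hj; rw [← hNM] at hj; exact (Multiset.mem_filter.1 hj).2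
      refine ⟨hall, ?_⟩
      rw [hNM] at hcard
      by_contra hne
      have hgt : (i : ℕ) < M.card := lt_of_le_of_ne hcard (Ne.symm hne)
      have hpos : 0 < M.card := by omega
      obtain ⟨a, ha⟩ := Multiset.card_pos_iff_exists_mem.1 hpos
      have hEle : M.erase a ≤ M := Multiset.erase_le a M
      have hcardE : (M.erase a).card = M.card - 1 := Multiset.card_erase_of_mem ha
      have hℓE : ℓ i (M.erase a) := by
        rw [hℓ]
        constructor
        · have := Multiset.count_le_of_le i hEle; omega
        · have hfe : (M.erase a).filter (fun j => j < i) = M.erase a :=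
            Multiset.filter_eq_self.2 (fun j hj => hall j (Multiset.mem_of_le hEle hj))
          rw [hfe]; omega
      have heq := hmin _ hℓE hEle
      have : (M.erase a).card = M.card := by rw [heq]
      omega
    · rintro ⟨hall, hcard⟩
      have hfM : M.filter (fun j => j < i) = M := Multiset.filter_eq_self.2 hall
      refine ⟨⟨?_, by rw [hfM, hcard]⟩, ?_⟩
      · rw [Multiset.count_eq_zero]
        intro hi; exact absurd (hall i hi) (lt_irrefl i)
      · intro N hN hle
        rw [hℓ] at hN
        have h1 : (i : ℕ) ≤ (N.filter (fun j => j < i)).card := hN.2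
        have h2 : (N.filter (fun j => j < i)).card ≤ N.card :=
          Multiset.card_le_card (Multiset.filter_le _ _)
        have h3 : N.card ≤ M.card := Multiset.card_le_card hle
        exact Multiset.eq_of_le_of_card_le hle (by omega)
  have hEiff : ∀ o o', E o o' ↔ o' < o := by
    intro o o'
    rw [hE]
    constructor
    · rintro ⟨M, hM, hmem⟩
      exact ((key o M).1 hM).1 o' hmem
    · intro hlt
      refine ⟨Multiset.replicate (o : ℕ) o', ?_, ?_⟩
      · rw [key]
        refine ⟨fun j hj => ?_, Multiset.card_replicate _ _⟩
        rw [Multiset.eq_of_mem_replicate hj]; exact hlt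
      · refine Multiset.mem_replicate.2 ⟨?_, rfl⟩
        have : (o' : ℕ) < (o : ℕ) := hlt
        omega
  refine ⟨key, hEiff, ?_, ?_⟩
  · refine ⟨fun i => ⟨c - 1 - i, by omega⟩, ?_⟩
    intro i hi
    rw [hEiff]
    simp only [Fin.mk_lt_mk]
    omega
  · rintro n ⟨p, hp⟩
    have claim : ∀ i ≤ n, (p i : ℕ) + i ≤ (p 0 : ℕ) := by
      intro i
      induction i with
      | zero => intro _; omega
      | succ k ih =>
        intro hk
        have h1 : (p k : ℕ) + k ≤ (p 0 : ℕ) := ih (by omega)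
        have h2 : p (k + 1) < p k := (hEiff _ _).1 (hp k (by omega))
        have : (p (k + 1) : ℕ) < (p k : ℕ) := h2
        omega
    have := claim n le_rfl
    have := (p 0).isLt
    omega
end
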